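/- Let n ≥ 10 be an even integer and let μ ∈ (0, 1) and ω > 0 be real. Then every complex root λ of Q_j satisfies Re λ = 0 for all j ∈ {0, 1, …, n−1} if and only if 4/(n−1)² ≤ μ ≤ 16/(n² − 8n + 8). That is, the regular n-gon relative equilibrium with central mass is linearly stable if and only if μ ∈ [4/(n−1)², 16/(n² − 8n + 8)]. -/
import Mathlib


open Real Finset

/-- `F_j = ω²·(12 − μ(n−1)(n−5) + μ(n² − 6nj + 6j² − 1)) / (6(2 + μ(n−1)))`. -/
noncomputable def Fcoef (n j : ℕ) (μ ω : ℝ) : ℝ :=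
  ω ^ 2 * (12 - μ * ((n : ℝ) - 1) * ((n : ℝ) - 5)
      + μ * ((n : ℝ) ^ 2 - 6 * n * j + 6 * (j : ℝ) ^ 2 - 1))
    / (6 * (2 + μ * ((n : ℝ) - 1)))

/-- `ε_j = 2μnω²/(2 + μ(n−1))` if `j = 1`, else `0`. -/
noncomputable def eps (n j : ℕ) (μ ω : ℝ) : ℝ :=
  if j = 1 then 2 * μ * n * ω ^ 2 / (2 + μ * ((n : ℝ) - 1)) else 0

/-- `ε'_j = 2μnω²/(2 + μ(n−1))` if `j = n−1`, else `0`. -/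
noncomputable def eps' (n j : ℕ) (μ ω : ℝ) : ℝ :=
  if j = n - 1 then 2 * μ * n * ω ^ 2 / (2 + μ * ((n : ℝ) - 1)) else 0

/-- The stability quartic `Q_j(λ) = λ⁴ + 2ω²λ² + ω⁴ − (F_j + ε_j)(F_j + ε'_j)`. -/
noncomputable def Q (n j : ℕ) (μ ω : ℝ) (lam : ℂ) : ℂ :=
  lam ^ 4 + 2 * (ω : ℂ) ^ 2 * lam ^ 2 + (ω : ℂ) ^ 4
    - ((Fcoef n j μ ω + eps n j μ ω : ℝ) : ℂ)
      * ((Fcoef n j μ ω + eps' n j μ ω : ℝ) : ℂ)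

/-- If `lam² = r` with `r ≤ 0` real, then `lam` is purely imaginary. -/
lemma re_eq_zero_of_sq_nonpos (lam : ℂ) (r : ℝ) (hr : r ≤ 0) (h : lam ^ 2 = (r : ℂ)) :
    lam.re = 0 := by
  have h1 : lam.re * lam.re - lam.im * lam.im = r := by
    have := congrArg Complex.re h
    simpa [pow_two, Complex.mul_re] using this
  have h2 : lam.re * lam.im + lam.im * lam.re = 0 := by
    have := congrArg Complex.im h
    simpa [pow_two, Complex.mul_im] using this
  by_contra hre
  have him : lam.im = 0 := by
    rcases mul_eq_zero.mp (show lam.re * lam.im = 0 by linarith) with h | h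
    · exact absurd h hre
    · exact h
  rw [him] at h1
  have : lam.re * lam.re = 0 := le_antisymm (by linarith) (mul_self_nonneg _)
  exact hre (by nlinarith)

/-- Roots of `λ⁴ + 2ω²λ² + ω⁴ − P` are all purely imaginary iff `0 ≤ P ≤ ω⁴`. -/
lemma quart_iff (ω P : ℝ) (hω : 0 < ω) :
    (∀ lam : ℂ, lam ^ 4 + 2 * (ω : ℂ) ^ 2 * lam ^ 2 + (ω : ℂ) ^ 4 - (P : ℂ) = 0 →
      lam.re = 0) ↔ 0 ≤ P ∧ P ≤ ω ^ 4 := by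
  constructor
  · intro h
    constructor
    · by_contra hP
      push_neg at hP
      set s := Real.sqrt (-P) with hs
      have hs2 : s ^ 2 = -P := Real.sq_sqrt (by linarith)
      have hspos : 0 < s := Real.sqrt_pos.mpr (by linarith)
      obtain ⟨z, hz⟩ := IsAlgClosed.exists_pow_nat_eq (-(ω : ℂ) ^ 2 + (s : ℂ) * Complex.I)
        (n := 2) (by norm_num)
      have hzz : z ^ 2 = ((-(ω ^ 2) : ℝ) : ℂ) + (s : ℂ) * Complex.I := by
        rw [hz]; push_cast; ring
      have hkey : (z ^ 2 + (ω : ℂ) ^ 2) ^ 2 = (P : ℂ) := by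
        rw [hz]
        have h1 : ((s : ℂ)) ^ 2 = ((-P : ℝ) : ℂ) := by exact_mod_cast congrArg Complex.ofReal hs2
        have h2 : Complex.I ^ 2 = -1 := Complex.I_sq
        push_cast at h1 ⊢
        linear_combination (Complex.I ^ 2) * h1 + (-(P : ℂ)) * h2
      have hroot : z ^ 4 + 2 * (ω : ℂ) ^ 2 * z ^ 2 + (ω : ℂ) ^ 4 - (P : ℂ) = 0 := by
        linear_combination hkey
      have hre := h z hroot
      have him : (z ^ 2).im = s := by rw [hzz]; simp [pow_two, Complex.mul_im]
      rw [pow_two, Complex.mul_im, hre] at him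
      simp at him
      linarith
    · by_contra hP
      push_neg at hP
      have hP0 : 0 ≤ P := le_trans (by positivity) hP.le
      have hsq : ω ^ 2 < Real.sqrt P := by
        have h4 : ω ^ 2 = Real.sqrt (ω ^ 4) := by
          rw [show ω ^ 4 = (ω ^ 2) ^ 2 by ring, Real.sqrt_sq (by positivity)]
        rw [h4]
        exact Real.sqrt_lt_sqrt (by positivity) hP
      set t := Real.sqrt (Real.sqrt P - ω ^ 2) with ht
      have ht2 : t ^ 2 = Real.sqrt P - ω ^ 2 := Real.sq_sqrt (by linarith)
      have htpos : 0 < t := Real.sqrt_pos.mpr (by linarith)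
      have hP2 : (Real.sqrt P) ^ 2 = P := Real.sq_sqrt hP0
      have hreal : t ^ 4 + 2 * ω ^ 2 * t ^ 2 + ω ^ 4 - P = 0 := by
        linear_combination (t ^ 2 + ω ^ 2 + Real.sqrt P) * ht2 + hP2
      have hroot : ((t : ℂ)) ^ 4 + 2 * (ω : ℂ) ^ 2 * ((t : ℂ)) ^ 2 + (ω : ℂ) ^ 4 - (P : ℂ) = 0 := by
        have := congrArg Complex.ofReal hreal
        push_cast at this
        linear_combination this
      have := h (t : ℂ) hroot
      rw [Complex.ofReal_re] at this
      linarith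
  · rintro ⟨h0, h1⟩ lam hlam
    have hP2 : (Real.sqrt P) ^ 2 = P := Real.sq_sqrt h0
    have hPc : ((Real.sqrt P : ℝ) : ℂ) ^ 2 = (P : ℂ) := by exact_mod_cast congrArg Complex.ofReal hP2
    have hfac : (lam ^ 2 + (ω : ℂ) ^ 2 - (Real.sqrt P : ℝ)) *
        (lam ^ 2 + (ω : ℂ) ^ 2 + (Real.sqrt P : ℝ)) = 0 := by
      linear_combination hlam - hPc
    have hle : Real.sqrt P ≤ ω ^ 2 := by
      have : Real.sqrt P ≤ Real.sqrt (ω ^ 4) := Real.sqrt_le_sqrt h1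
      rwa [show ω ^ 4 = (ω ^ 2) ^ 2 by ring, Real.sqrt_sq (by positivity)] at this
    have hge : 0 ≤ Real.sqrt P := Real.sqrt_nonneg P
    rcases mul_eq_zero.mp hfac with hcase | hcase
    · refine re_eq_zero_of_sq_nonpos lam (Real.sqrt P - ω ^ 2) (by linarith) ?_
      push_cast
      linear_combination hcase
    · refine re_eq_zero_of_sq_nonpos lam (-(Real.sqrt P) - ω ^ 2) (by linarith) ?_
      push_cast
      linear_combination hcase

set_option maxHeartbeats 1000000 in
/-- For even `n ≥ 10`: the regular `n`-gon with central mass is linearly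
stable iff `4/(n−1)² ≤ μ ≤ 16/(n² − 8n + 8)`. -/
theorem ngon_stable_iff_even (n : ℕ) (hn : 10 ≤ n) (hne : Even n)
    (μ ω : ℝ) (hμ : μ ∈ Set.Ioo (0 : ℝ) 1) (hω : 0 < ω) :
    (∀ j < n, ∀ lam : ℂ, Q n j μ ω lam = 0 → lam.re = 0)
      ↔ 4 / ((n : ℝ) - 1) ^ 2 ≤ μ ∧ μ ≤ 16 / ((n : ℝ) ^ 2 - 8 * n + 8) := by
  obtain ⟨hμ0, hμ1⟩ := hμ
  have hN : (10 : ℝ) ≤ (n : ℝ) := by exact_mod_cast hn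
  have hD : 0 < 2 + μ * ((n : ℝ) - 1) := by nlinarith
  have hω4 : (0 : ℝ) < ω ^ 4 := by positivity
  have hden : (0 : ℝ) < (n : ℝ) ^ 2 - 8 * n + 8 := by nlinarith
  have hden1 : (0 : ℝ) < ((n : ℝ) - 1) ^ 2 := by nlinarith
  -- root condition per j
  have hQiff : ∀ j : ℕ, (∀ lam : ℂ, Q n j μ ω lam = 0 → lam.re = 0) ↔
      (0 ≤ (Fcoef n j μ ω + eps n j μ ω) * (Fcoef n j μ ω + eps' n j μ ω) ∧
       (Fcoef n j μ ω + eps n j μ ω) * (Fcoef n j μ ω + eps' n j μ ω) ≤ ω ^ 4) := by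
    intro j
    rw [← quart_iff ω _ hω]
    apply forall_congr'
    intro lam
    have hc : Q n j μ ω lam = lam ^ 4 + 2 * (ω : ℂ) ^ 2 * lam ^ 2 + (ω : ℂ) ^ 4
        - ((((Fcoef n j μ ω + eps n j μ ω) * (Fcoef n j μ ω + eps' n j μ ω) : ℝ)) : ℂ) := by
      unfold Q; push_cast; ring
    rw [hc]
  -- simplified formula for F
  have hF : ∀ j : ℕ, Fcoef n j μ ω =
      ω ^ 2 * ((2 + μ * ((n : ℝ) - 1)) - μ * ((j : ℝ) * ((n : ℝ) - j))) / (2 + μ * ((n : ℝ) - 1)) := by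
    intro j
    unfold Fcoef
    rw [div_eq_div_iff (by positivity) hD.ne']
    ring
  have he1 : eps n 1 μ ω = 2 * μ * n * ω ^ 2 / (2 + μ * ((n : ℝ) - 1)) := by
    simp [eps]
  have he1' : eps' n 1 μ ω = 0 := by
    simp [eps', show (1 : ℕ) ≠ n - 1 by omega]
  have hP1 : (Fcoef n 1 μ ω + eps n 1 μ ω) * (Fcoef n 1 μ ω + eps' n 1 μ ω)
      = (2 * ω ^ 2 + 2 * μ * n * ω ^ 2) * (2 * ω ^ 2) / (2 + μ * ((n : ℝ) - 1)) ^ 2 := by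
    rw [hF, he1, he1']
    field_simp
    ring
  -- half point
  have hhalfcast : ((n / 2 : ℕ) : ℝ) = (n : ℝ) / 2 := by
    obtain ⟨k, hk⟩ := hne
    have : n / 2 = k := by omega
    rw [this, hk]
    push_cast
    ring
  have hehalf : eps n (n / 2) μ ω = 0 := by
    simp [eps, show n / 2 ≠ 1 by omega]
  have hehalf' : eps' n (n / 2) μ ω = 0 := by
    simp [eps', show n / 2 ≠ n - 1 by omega]
  have hn1cast : ((n - 1 : ℕ) : ℝ) = (n : ℝ) - 1 := by
    have := Nat.cast_sub (show 1 ≤ n by omega) (R := ℝ)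
    simpa using this
  have hen1 : eps n (n - 1) μ ω = 0 := by
    simp [eps, show n - 1 ≠ 1 by omega]
  have hen1' : eps' n (n - 1) μ ω = 2 * μ * n * ω ^ 2 / (2 + μ * ((n : ℝ) - 1)) := by
    simp [eps']
  constructor
  · intro h
    constructor
    · -- lower bound from j = 1
      obtain ⟨-, hle⟩ := (hQiff 1).mp (h 1 (by omega))
      rw [hP1, div_le_iff₀ (by positivity)] at hle
      have h4 : 4 * (1 + μ * n) ≤ (2 + μ * ((n : ℝ) - 1)) ^ 2 := by
        have := le_of_mul_le_mul_right (show (4 * (1 + μ * n)) * ω ^ 4 ≤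
          ((2 + μ * ((n : ℝ) - 1)) ^ 2) * ω ^ 4 by linarith [hle]; ) hω4
        exact this
      rw [div_le_iff₀ hden1]
      nlinarith [h4, hμ0]
    · -- upper bound from j = n/2
      obtain ⟨-, hle⟩ := (hQiff (n / 2)).mp (h (n / 2) (by omega))
      rw [hF, hehalf, hehalf', add_zero, hhalfcast, div_mul_div_comm,
        div_le_iff₀ (by positivity)] at hle
      have h6 : (2 + μ * ((n : ℝ) - 1) - μ * ((n : ℝ) / 2 * ((n : ℝ) - (n : ℝ) / 2))) ^ 2
          ≤ (2 + μ * ((n : ℝ) - 1)) ^ 2 := by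
        have := le_of_mul_le_mul_right (show
          ((2 + μ * ((n : ℝ) - 1) - μ * ((n : ℝ) / 2 * ((n : ℝ) - (n : ℝ) / 2))) ^ 2) * ω ^ 4 ≤
          ((2 + μ * ((n : ℝ) - 1)) ^ 2) * ω ^ 4 by nlinarith [hle]) hω4
        exact this
      have hcpos : 0 < μ * ((n : ℝ) ^ 2 / 4) :=
        mul_pos hμ0 (by positivity)
      have hc2d : μ * ((n : ℝ) ^ 2 / 4) ≤ 2 * (2 + μ * ((n : ℝ) - 1)) := by
        nlinarith [h6, hcpos]
      rw [le_div_iff₀ hden]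
      linarith
  · rintro ⟨hlo, hhi⟩ j hj
    have hlo' : 4 ≤ μ * ((n : ℝ) - 1) ^ 2 := by
      rw [div_le_iff₀ hden1] at hlo
      linarith
    have hhi' : μ * ((n : ℝ) ^ 2 - 8 * n + 8) ≤ 16 := by
      rw [le_div_iff₀ hden] at hhi
      linarith
    rw [hQiff]
    by_cases hj1 : j = 1
    · subst hj1
      rw [hP1]
      constructor
      · apply div_nonneg _ (by positivity)
        have hnn : (0 : ℝ) ≤ 2 * μ * n * ω ^ 2 := by positivity
        nlinarith [sq_nonneg ω]
      · rw [div_le_iff₀ (by positivity)]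
        have key : 4 * μ * ω ^ 4 ≤ μ ^ 2 * ((n : ℝ) - 1) ^ 2 * ω ^ 4 := by
          nlinarith [mul_le_mul_of_nonneg_left hlo' (le_of_lt (mul_pos hμ0 hω4))]
        nlinarith [key]
    · by_cases hjn : j = n - 1
      · subst hjn
        have hFn1 : Fcoef n (n - 1) μ ω = ω ^ 2 * 2 / (2 + μ * ((n : ℝ) - 1)) := by
          rw [hF, hn1cast]
          congr 1
          ring
        have hPn1 : (Fcoef n (n - 1) μ ω + eps n (n - 1) μ ω)
            * (Fcoef n (n - 1) μ ω + eps' n (n - 1) μ ω)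
            = (2 * ω ^ 2) * (2 * ω ^ 2 + 2 * μ * n * ω ^ 2) / (2 + μ * ((n : ℝ) - 1)) ^ 2 := by
          rw [hFn1, hen1, hen1']
          field_simp
          ring
        rw [hPn1]
        constructor
        · apply div_nonneg _ (by positivity)
          have hnn : (0 : ℝ) ≤ 2 * μ * n * ω ^ 2 := by positivity
          nlinarith [sq_nonneg ω]
        · rw [div_le_iff₀ (by positivity)]
          have key : 4 * μ * ω ^ 4 ≤ μ ^ 2 * ((n : ℝ) - 1) ^ 2 * ω ^ 4 := by
            nlinarith [mul_le_mul_of_nonneg_left hlo' (le_of_lt (mul_pos hμ0 hω4))]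
          nlinarith [key]
      · -- generic j : eps = eps' = 0
        have he : eps n j μ ω = 0 := by simp [eps, hj1]
        have he' : eps' n j μ ω = 0 := by simp [eps', hjn]
        have hjR : (j : ℝ) < (n : ℝ) := by exact_mod_cast hj
        have hc0 : 0 ≤ μ * ((j : ℝ) * ((n : ℝ) - j)) :=
          mul_nonneg hμ0.le (mul_nonneg (Nat.cast_nonneg j) (by linarith))
        have hcmax : (j : ℝ) * ((n : ℝ) - j) ≤ (n : ℝ) ^ 2 / 4 := by
          nlinarith [sq_nonneg ((j : ℝ) - (n : ℝ) / 2)]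
        have hc2 : μ * ((j : ℝ) * ((n : ℝ) - j)) ≤ 2 * (2 + μ * ((n : ℝ) - 1)) := by
          have := mul_le_mul_of_nonneg_left hcmax hμ0.le
          nlinarith [hhi']
        rw [hF, he, he', add_zero]
        constructor
        · exact mul_self_nonneg _
        · rw [div_mul_div_comm, div_le_iff₀ (by positivity)]
          nlinarith [mul_nonneg (mul_nonneg hc0
            (show (0 : ℝ) ≤ 2 * (2 + μ * ((n : ℝ) - 1)) - μ * ((j : ℝ) * ((n : ℝ) - j)) by
              linarith)) hω4.le]
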